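/- For y = 1,2,3,4 let r_y ∈ ℝ³ be the unit vectors r₁ = (1,1,1)/√3, r₂ = (1,−1,−1)/√3, r₃ = (−1,1,−1)/√3, r₄ = (−1,−1,1)/√3, and define the qubit projections B^y_1 = (1/2)(𝟙 + r_y·σ) and B^y_2 = 𝟙 − B^y_1, where r·σ = x σ_x + y σ_y + z σ_z with σ_x, σ_y, σ_z the Pauli matrices. Then each pair {B^y_1, B^y_2} is a projective rank-one measurement on ℂ², and (2/2)·∑_{1 ≤ y < z ≤ 4} ∑_{j,k=1}^{2} √(1 − tr(B^y_j B^z_k)) = 4·(√3 + √6). -/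

import Mathlib

open Finset Matrix

/-- The Pauli matrix `σ_x`. -/
def pauliX : Matrix (Fin 2) (Fin 2) ℂ := !![0, 1; 1, 0]

/-- The Pauli matrix `σ_y`. -/
def pauliY : Matrix (Fin 2) (Fin 2) ℂ := !![0, -Complex.I; Complex.I, 0]

/-- The Pauli matrix `σ_z`. -/
def pauliZ : Matrix (Fin 2) (Fin 2) ℂ := !![1, 0; 0, -1]

/-- `r · σ` for a vector `r ∈ ℝ³`. -/
def dotPauli (r : Fin 3 → ℝ) : Matrix (Fin 2) (Fin 2) ℂ :=
  (r 0 : ℂ) • pauliX + (r 1 : ℂ) • pauliY + (r 2 : ℂ) • pauliZ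

/-- The four Bloch vectors of a regular tetrahedron. -/
noncomputable def tetra : Fin 4 → Fin 3 → ℝ :=
  ![fun i => (Real.sqrt 3)⁻¹ * ![1, 1, 1] i,
    fun i => (Real.sqrt 3)⁻¹ * ![1, -1, -1] i,
    fun i => (Real.sqrt 3)⁻¹ * ![-1, 1, -1] i,
    fun i => (Real.sqrt 3)⁻¹ * ![-1, -1, 1] i]

/-- The qubit measurement `{B^y_1, B^y_2}` with Bloch vector `tetra y`:
`B^y_1 = (1/2)(𝟙 + r_y·σ)`, `B^y_2 = 𝟙 − B^y_1`. -/
noncomputable def tetraB (y : Fin 4) : Fin 2 → Matrix (Fin 2) (Fin 2) ℂ :=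
  ![(1 / 2 : ℂ) • (1 + dotPauli (tetra y)),
    1 - (1 / 2 : ℂ) • (1 + dotPauli (tetra y))]

/-! For Bloch vectors `r, s` the projections `B_r = (𝟙 + r·σ)/2` satisfy `tr (B_r B_s) = (1 + r·s)/2`,
since `r·σ` is traceless and `tr ((r·σ)(s·σ)) = 2 r·s`; for a unit vector `(r·σ)² = 𝟙` makes `B_r`
idempotent, and the second outcome `𝟙 - B_r` is `B_{-r}`. Distinct tetrahedron vectors have
`r·s = -1/3`, so each of the six pairs contributes `2 (√(2/3) + √(1/3)) = (2/3)(√3 + √6)`. -/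

lemma dotPauli_neg (r : Fin 3 → ℝ) : dotPauli (-r) = -dotPauli r := by
  simp only [dotPauli, Pi.neg_apply, Complex.ofReal_neg, neg_smul]
  abel

lemma dotPauli_isHermitian (r : Fin 3 → ℝ) : (dotPauli r).IsHermitian := by
  ext i j
  fin_cases i <;> fin_cases j <;> simp [dotPauli, pauliX, pauliY, pauliZ]

lemma dotPauli_mul_self (r : Fin 3 → ℝ) : dotPauli r * dotPauli r = ((r ⬝ᵥ r : ℝ) : ℂ) • 1 := by
  ext i j
  fin_cases i <;> fin_cases j <;>
    simp [dotPauli, pauliX, pauliY, pauliZ, mul_apply, dotProduct, Fin.sum_univ_three,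
      Complex.ext_iff] <;> ring_nf <;> simp

lemma trace_dotPauli (r : Fin 3 → ℝ) : (dotPauli r).trace = 0 := by
  simp [dotPauli, pauliX, pauliY, pauliZ, trace]

lemma trace_dotPauli_mul (r s : Fin 3 → ℝ) :
    (dotPauli r * dotPauli s).trace = 2 * ((r ⬝ᵥ s : ℝ) : ℂ) := by
  simp [dotPauli, pauliX, pauliY, pauliZ, trace, dotProduct, Fin.sum_univ_three]
  ring_nf
  simp

noncomputable def blochProj (r : Fin 3 → ℝ) : Matrix (Fin 2) (Fin 2) ℂ :=
  (1 / 2 : ℂ) • (1 + dotPauli r)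

lemma one_sub_blochProj (r : Fin 3 → ℝ) : 1 - blochProj r = blochProj (-r) := by
  rw [blochProj, blochProj, dotPauli_neg]
  module

lemma blochProj_isHermitian (r : Fin 3 → ℝ) : (blochProj r).IsHermitian :=
  (isHermitian_one.add (dotPauli_isHermitian r)).smul (by simp [IsSelfAdjoint])

lemma trace_blochProj (r : Fin 3 → ℝ) : (blochProj r).trace = 1 := by
  simp [blochProj, trace_dotPauli]

lemma blochProj_mul_self {r : Fin 3 → ℝ} (hr : r ⬝ᵥ r = 1) :
    blochProj r * blochProj r = blochProj r := by
  rw [blochProj, smul_mul_smul_comm, add_mul, mul_add, mul_add, dotPauli_mul_self, hr]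
  simp only [one_mul, mul_one, Complex.ofReal_one, one_smul]
  module

lemma trace_blochProj_mul (r s : Fin 3 → ℝ) :
    (blochProj r * blochProj s).trace = ((1 + r ⬝ᵥ s) / 2 : ℝ) := by
  simp [blochProj, add_mul, mul_add, trace_add, trace_dotPauli, trace_dotPauli_mul]
  ring

lemma sqrt_one_sub_re_trace_blochProj_mul (r s : Fin 3 → ℝ) :
    Real.sqrt (1 - (blochProj r * blochProj s).trace.re) = Real.sqrt ((1 - r ⬝ᵥ s) / 2) := by
  rw [trace_blochProj_mul, Complex.ofReal_re]
  ring_nf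

lemma tetra_dotProduct (y z : Fin 4) :
    tetra y ⬝ᵥ tetra z = if y = z then 1 else -1 / 3 := by
  have h3 : Real.sqrt 3 ^ 2 = 3 := Real.sq_sqrt (by norm_num)
  fin_cases y <;> fin_cases z <;>
    simp [tetra, dotProduct, Fin.sum_univ_three] <;> field_simp <;> linarith

lemma tetraB_zero (y : Fin 4) : tetraB y 0 = blochProj (tetra y) := rfl

lemma tetraB_one (y : Fin 4) : tetraB y 1 = blochProj (-tetra y) :=
  one_sub_blochProj (tetra y)

lemma sqrt_div_three (a : ℝ) : Real.sqrt (a / 3) = Real.sqrt (3 * a) / 3 := by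
  rw [show a / 3 = 3 * a / 3 ^ 2 by ring, Real.sqrt_div' _ (sq_nonneg 3),
    Real.sqrt_sq (by norm_num)]

lemma sum_sqrt_one_sub_re_trace_tetraB_mul_of_ne {y z : Fin 4} (h : y ≠ z) :
    ∑ j : Fin 2, ∑ k : Fin 2, Real.sqrt (1 - ((tetraB y j * tetraB z k).trace).re)
      = 2 / 3 * (Real.sqrt 3 + Real.sqrt 6) := by
  simp only [Fin.sum_univ_two, tetraB_zero, tetraB_one, sqrt_one_sub_re_trace_blochProj_mul,
    neg_dotProduct, dotProduct_neg, neg_neg, tetra_dotProduct, if_neg h]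
  have h₁ : Real.sqrt ((1 - -1 / 3) / 2) = Real.sqrt 6 / 3 := by
    rw [show (1 - -1 / 3) / 2 = (2 : ℝ) / 3 by norm_num, sqrt_div_three]; norm_num
  have h₂ : Real.sqrt ((1 - -(-1 / 3)) / 2) = Real.sqrt 3 / 3 := by
    rw [show (1 - -(-1 / 3)) / 2 = (1 : ℝ) / 3 by norm_num, sqrt_div_three, mul_one]
  rw [h₁, h₂]
  ring

theorem stmt_14 :
    (∀ (y : Fin 4) (a : Fin 2),
      (tetraB y a).IsHermitian ∧ tetraB y a * tetraB y a = tetraB y a ∧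
        (tetraB y a).trace = 1) ∧
    (∀ y : Fin 4, ∑ a, tetraB y a = 1) ∧
    ((2 / 2 : ℝ) * ∑ p ∈ Finset.univ.filter (fun p : Fin 4 × Fin 4 => p.1 < p.2),
        ∑ j : Fin 2, ∑ k : Fin 2,
          Real.sqrt (1 - ((tetraB p.1 j * tetraB p.2 k).trace).re)
      = 4 * (Real.sqrt 3 + Real.sqrt 6)) := by
  refine ⟨fun y ↦ Fin.forall_fin_two.2 ⟨?_, ?_⟩, fun y ↦ ?_, ?_⟩
  · have hunit : tetra y ⬝ᵥ tetra y = 1 := by simp [tetra_dotProduct]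
    exact ⟨blochProj_isHermitian _, blochProj_mul_self hunit, trace_blochProj _⟩
  · have hunit : -tetra y ⬝ᵥ -tetra y = 1 := by simp [tetra_dotProduct]
    rw [tetraB_one]
    exact ⟨blochProj_isHermitian _, blochProj_mul_self hunit, trace_blochProj _⟩
  · rw [Fin.sum_univ_two, tetraB_one, ← one_sub_blochProj, tetraB_zero, add_sub_cancel]
  · have hpairs : (Finset.univ.filter (fun p : Fin 4 × Fin 4 => p.1 < p.2)).card = 6 := by
      decide
    rw [sum_congr rfl fun p hp ↦
        sum_sqrt_one_sub_re_trace_tetraB_mul_of_ne (mem_filter.1 hp).2.ne,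
      sum_const, hpairs, nsmul_eq_mul]
    ring
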